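/- Let γ : [a,b] → ℝ³ be a C² regular unit-speed curve with frame T = γ', N a C¹ unit normal field, B = T × N, normal curvature κ_n = ⟨T', N⟩, geodesic curvature κ_g = −⟨T', B⟩ and geodesic torsion τ_g = ⟨N', B⟩. Let u, v : [a,b] × [0,c] → ℝ be C¹ functions and define p(s,t) = γ(s) + u(s,t)·N(s) + v(s,t)·B(s). Then for all (s,t), |p_s × p_t|² = (1 − u·κ_n + v·κ_g)²·(u_t² + v_t²) + ((u_s − τ_g·v)·v_t − (v_s + τ_g·u)·u_t)², where subscripts denote partial derivatives with respect to s and t. -/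

import Mathlib

open MeasureTheory Set
open scoped RealInnerProductSpace

noncomputable section

abbrev E3 := EuclideanSpace ℝ (Fin 3)

/-- The cross product on `ℝ³`. -/
def cross3 (x y : E3) : E3 :=
  (WithLp.equiv 2 (Fin 3 → ℝ)).symm
    (crossProduct ((WithLp.equiv 2 (Fin 3 → ℝ)) x) ((WithLp.equiv 2 (Fin 3 → ℝ)) y))

/- Auxiliary lemmas -/

lemma cross3_norm_sq (x y : E3) : ‖cross3 x y‖ ^ 2 = ‖x‖ ^ 2 * ‖y‖ ^ 2 - ⟪x, y⟫ ^ 2 := by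
  simp only [← real_inner_self_eq_norm_sq, PiLp.inner_apply, RCLike.inner_apply, cross3,
    crossProduct, Fin.sum_univ_three]
  simp [crossProduct]
  ring

lemma inner_cross3_left (x y : E3) : ⟪cross3 x y, x⟫ = 0 := by
  simp only [PiLp.inner_apply, RCLike.inner_apply, cross3, crossProduct, Fin.sum_univ_three]
  simp [crossProduct]
  ring

lemma inner_cross3_right (x y : E3) : ⟪cross3 x y, y⟫ = 0 := by
  simp only [PiLp.inner_apply, RCLike.inner_apply, cross3, crossProduct, Fin.sum_univ_three]
  simp [crossProduct]
  ring

lemma parseval3 (T N B x : E3) (hT : ‖T‖ = 1) (hN : ‖N‖ = 1) (hB : ‖B‖ = 1)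
    (hTN : ⟪T,N⟫ = 0) (hTB : ⟪T,B⟫ = 0) (hNB : ⟪N,B⟫ = 0) :
    ‖x‖ ^ 2 = ⟪x,T⟫ ^ 2 + ⟪x,N⟫ ^ 2 + ⟪x,B⟫ ^ 2 := by
  have hTT : ⟪T,T⟫ = (1:ℝ) := by rw [real_inner_self_eq_norm_sq, hT]; norm_num
  have hNN : ⟪N,N⟫ = (1:ℝ) := by rw [real_inner_self_eq_norm_sq, hN]; norm_num
  have hBB : ⟪B,B⟫ = (1:ℝ) := by rw [real_inner_self_eq_norm_sq, hB]; norm_num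
  set f : Fin 3 → E3 := ![T,N,B] with hf
  have horth : Orthonormal ℝ f := by
    rw [orthonormal_iff_ite]
    intro i j
    fin_cases i <;> fin_cases j <;>
      simp only [f, Matrix.cons_val_zero, Matrix.cons_val_one, Matrix.head_cons,
        Matrix.cons_val_two, Matrix.tail_cons, Fin.mk_zero, Fin.mk_one] <;>
      simp [hTT, hNN, hBB, hTN, hTB, hNB, real_inner_comm T N, real_inner_comm T B,
        real_inner_comm N B, hT, hN, hB]
  have hcard : Fintype.card (Fin 3) = Module.finrank ℝ E3 := by
    simp [finrank_euclideanSpace_fin]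
  have hcoe : ⇑(basisOfOrthonormalOfCardEqFinrank horth hcard) = f :=
    coe_basisOfOrthonormalOfCardEqFinrank horth hcard
  let ob : OrthonormalBasis (Fin 3) ℝ E3 :=
    (basisOfOrthonormalOfCardEqFinrank horth hcard).toOrthonormalBasis (by rwa [hcoe])
  have hob : ⇑ob = f := by
    rw [show ⇑ob = ⇑(basisOfOrthonormalOfCardEqFinrank horth hcard) from
      Module.Basis.coe_toOrthonormalBasis _ _, hcoe]
  have key := ob.sum_inner_mul_inner x x
  rw [Fin.sum_univ_three, hob] at key
  simp only [f, Matrix.cons_val_zero, Matrix.cons_val_one, Matrix.head_cons,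
    Matrix.cons_val_two, Matrix.tail_cons] at key
  rw [← real_inner_self_eq_norm_sq, ← key, real_inner_comm T x, real_inner_comm N x,
    real_inner_comm B x]
  ring

def crossLM : E3 →ₗ[ℝ] E3 →ₗ[ℝ] E3 where
  toFun x :=
    { toFun := fun y => cross3 x y
      map_add' := by
        intro y z
        simp [cross3, WithLp.ofLp_add, WithLp.toLp_add, map_add]
      map_smul' := by
        intro c y
        simp [cross3, WithLp.ofLp_smul, WithLp.toLp_smul, _root_.map_smul] }
  map_add' := by
    intro x y
    ext z i
    simp [cross3, WithLp.ofLp_add, WithLp.toLp_add, map_add, LinearMap.add_apply]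
  map_smul' := by
    intro c x
    ext z i
    simp [cross3, WithLp.ofLp_smul, WithLp.toLp_smul, _root_.map_smul, LinearMap.smul_apply]

def crossCLM : E3 →L[ℝ] E3 →L[ℝ] E3 :=
  LinearMap.toContinuousLinearMap
    { toFun := fun x => LinearMap.toContinuousLinearMap (crossLM x)
      map_add' := by intro x y; ext z; simp
      map_smul' := by intro c x; ext z; simp }

@[simp] lemma crossCLM_apply (x y : E3) : crossCLM x y = cross3 x y := rfl

set_option maxHeartbeats 2000000 in
/-- For `p(s,t) = γ(s) + u(s,t)·N(s) + v(s,t)·B(s)` along a ribbon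
`(γ, N)` with `B = T × N`, `κₙ = ⟨T', N⟩`, `κ_g = −⟨T', B⟩`, `τ_g = ⟨N', B⟩`, one has
`|p_s × p_t|² = (1 − u·κₙ + v·κ_g)²·(u_t² + v_t²)
  + ((u_s − τ_g·v)·v_t − (v_s + τ_g·u)·u_t)²`. -/
theorem norm_sq_cross_of_boundary_parametrization
    (a b c : ℝ) (hab : a < b) (hc : 0 < c)
    (γ N : ℝ → E3)
    (hγ : ContDiffOn ℝ 2 γ (Icc a b))
    (hN : ContDiffOn ℝ 1 N (Icc a b))
    (T B : ℝ → E3)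
    (hT : T = fun s => derivWithin γ (Icc a b) s)
    (hB : B = fun s => cross3 (T s) (N s))
    (hγunit : ∀ s ∈ Icc a b, ‖T s‖ = 1)
    (hNunit : ∀ s ∈ Icc a b, ‖N s‖ = 1)
    (hNperp : ∀ s ∈ Icc a b, ⟪N s, T s⟫ = 0)
    (κn κg τg : ℝ → ℝ)
    (hκn : κn = fun s => ⟪derivWithin T (Icc a b) s, N s⟫)
    (hκg : κg = fun s => -⟪derivWithin T (Icc a b) s, B s⟫)
    (hτg : τg = fun s => ⟪derivWithin N (Icc a b) s, B s⟫)
    (S : Set (ℝ × ℝ)) (hS : S = Icc a b ×ˢ Icc 0 c)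
    (u v : ℝ × ℝ → ℝ)
    (hu : ContDiffOn ℝ 1 u S)
    (hv : ContDiffOn ℝ 1 v S)
    (p : ℝ × ℝ → E3)
    (hp : p = fun q => γ q.1 + u q • N q.1 + v q • B q.1)
    -- partial derivatives:
    (ps pt : ℝ × ℝ → E3) (us ut vs vt : ℝ × ℝ → ℝ)
    (hps : ps = fun q => fderivWithin ℝ p S q (1, 0))
    (hpt : pt = fun q => fderivWithin ℝ p S q (0, 1))
    (hus : us = fun q => fderivWithin ℝ u S q (1, 0))
    (hut : ut = fun q => fderivWithin ℝ u S q (0, 1))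
    (hvs : vs = fun q => fderivWithin ℝ v S q (1, 0))
    (hvt : vt = fun q => fderivWithin ℝ v S q (0, 1)) :
    ∀ q ∈ S,
      ‖cross3 (ps q) (pt q)‖ ^ 2
        = (1 - u q * κn q.1 + v q * κg q.1) ^ 2 * ((ut q) ^ 2 + (vt q) ^ 2)
          + ((us q - τg q.1 * v q) * vt q - (vs q + τg q.1 * u q) * ut q) ^ 2 := by
  intro q hq
  have hI : UniqueDiffOn ℝ (Icc a b) := uniqueDiffOn_Icc hab
  have hSu : UniqueDiffOn ℝ S := by
    rw [hS]; exact (uniqueDiffOn_Icc hab).prod (uniqueDiffOn_Icc hc)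
  have hq1 : q.1 ∈ Icc a b := by rw [hS] at hq; exact hq.1
  set s := q.1 with hsdef
  -- differentiability of the frame
  have hγd : DifferentiableOn ℝ γ (Icc a b) := hγ.differentiableOn two_ne_zero
  have hTc : ContDiffOn ℝ 1 T (Icc a b) := by
    rw [hT]; exact hγ.derivWithin hI (by norm_num)
  have hTd : DifferentiableOn ℝ T (Icc a b) := hTc.differentiableOn one_ne_zero
  have hNd : DifferentiableOn ℝ N (Icc a b) := hN.differentiableOn one_ne_zero
  obtain ⟨dT, hdT⟩ : ∃ x : E3, x = derivWithin T (Icc a b) s := ⟨_, rfl⟩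
  obtain ⟨dN, hdN⟩ : ∃ x : E3, x = derivWithin N (Icc a b) s := ⟨_, rfl⟩
  have hTder : HasDerivWithinAt T dT (Icc a b) s := by
    rw [hdT]; exact (hTd s hq1).hasDerivWithinAt
  have hNder : HasDerivWithinAt N dN (Icc a b) s := by
    rw [hdN]; exact (hNd s hq1).hasDerivWithinAt
  obtain ⟨dB, hdB⟩ : ∃ x : E3, x = cross3 dT (N s) + cross3 (T s) dN := ⟨_, rfl⟩
  have hBder : HasDerivWithinAt B dB (Icc a b) s := by
    have h1 : HasDerivWithinAt (fun r => crossCLM (T r)) (crossCLM dT) (Icc a b) s :=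
      crossCLM.hasFDerivAt.comp_hasDerivWithinAt s hTder
    have h2 := h1.clm_apply hNder
    rw [hB, hdB]
    exact h2
  -- pointwise frame relations
  have hTT : ∀ r ∈ Icc a b, ⟪T r, T r⟫ = (1:ℝ) := fun r hr => by
    rw [real_inner_self_eq_norm_sq, hγunit r hr]; norm_num
  have hNN : ∀ r ∈ Icc a b, ⟪N r, N r⟫ = (1:ℝ) := fun r hr => by
    rw [real_inner_self_eq_norm_sq, hNunit r hr]; norm_num
  have hBT : ∀ r ∈ Icc a b, ⟪B r, T r⟫ = (0:ℝ) := fun r hr => by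
    rw [hB]; exact inner_cross3_left _ _
  have hBN : ∀ r ∈ Icc a b, ⟪B r, N r⟫ = (0:ℝ) := fun r hr => by
    rw [hB]; exact inner_cross3_right _ _
  have hBnorm : ∀ r ∈ Icc a b, ‖B r‖ = 1 := fun r hr => by
    have h1 : ‖B r‖ ^ 2 = 1 := by
      rw [hB]
      rw [cross3_norm_sq, hγunit r hr, hNunit r hr,
        real_inner_comm (N r) (T r), hNperp r hr]
      norm_num
    nlinarith [norm_nonneg (B r)]
  have hBB : ∀ r ∈ Icc a b, ⟪B r, B r⟫ = (1:ℝ) := fun r hr => by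
    rw [real_inner_self_eq_norm_sq, hBnorm r hr]; norm_num
  -- derivatives of constant inner products
  have key : ∀ (f g : ℝ → E3) (df dg : E3) (k : ℝ),
      HasDerivWithinAt f df (Icc a b) s → HasDerivWithinAt g dg (Icc a b) s →
      (∀ r ∈ Icc a b, ⟪f r, g r⟫ = k) → ⟪f s, dg⟫ + ⟪df, g s⟫ = 0 := by
    intro f g df dg k hf hg hfg
    have h1 : HasDerivWithinAt (fun r => ⟪f r, g r⟫) (⟪f s, dg⟫ + ⟪df, g s⟫) (Icc a b) s :=
      hf.inner ℝ hg
    have h2 : HasDerivWithinAt (fun r => ⟪f r, g r⟫) 0 (Icc a b) s :=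
      (hasDerivWithinAt_const (c := k) (s := Icc a b) (x := s)).congr
        (fun r hr => hfg r hr) (hfg s hq1)
    exact (hI s hq1).eq_deriv _ h1 h2
  have rTT : ⟪dT, T s⟫ = 0 := by
    have h := key T T dT dT 1 hTder hTder hTT
    have hc := real_inner_comm (T s) dT
    linarith
  have rNN : ⟪dN, N s⟫ = 0 := by
    have h := key N N dN dN 1 hNder hNder hNN
    have hc := real_inner_comm (N s) dN
    linarith
  have rNT : ⟪N s, dT⟫ + ⟪dN, T s⟫ = 0 := key N T dN dT 0 hNder hTder hNperp
  have rBT : ⟪B s, dT⟫ + ⟪dB, T s⟫ = 0 := key B T dB dT 0 hBder hTder hBT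
  have rBN : ⟪B s, dN⟫ + ⟪dB, N s⟫ = 0 := key B N dB dN 0 hBder hNder hBN
  have rBB : ⟪dB, B s⟫ = 0 := by
    have h := key B B dB dB 1 hBder hBder hBB
    have hc := real_inner_comm (B s) dB
    linarith
  -- curvature values
  have hκns : κn s = ⟪dT, N s⟫ := by rw [hκn, hdT]
  have hκgs : κg s = -⟪dT, B s⟫ := by rw [hκg, hdT]
  have hτgs : τg s = ⟪dN, B s⟫ := by rw [hτg, hdN]
  -- fderiv of p
  have hmaps : MapsTo Prod.fst S (Icc a b) := by
    rw [hS]; exact fun x hx => hx.1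
  have hγder : HasDerivWithinAt γ (T s) (Icc a b) s := by
    have h := (hγd s hq1).hasDerivWithinAt
    rw [hT]
    exact h
  have fγ : HasFDerivWithinAt (fun q : ℝ × ℝ => γ q.1)
      (((1 : ℝ →L[ℝ] ℝ).smulRight (T s)).comp (ContinuousLinearMap.fst ℝ ℝ ℝ)) S q :=
    hγder.hasFDerivWithinAt.comp q hasFDerivWithinAt_fst hmaps
  have fN : HasFDerivWithinAt (fun q : ℝ × ℝ => N q.1)
      (((1 : ℝ →L[ℝ] ℝ).smulRight dN).comp (ContinuousLinearMap.fst ℝ ℝ ℝ)) S q :=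
    hNder.hasFDerivWithinAt.comp q hasFDerivWithinAt_fst hmaps
  have fB : HasFDerivWithinAt (fun q : ℝ × ℝ => B q.1)
      (((1 : ℝ →L[ℝ] ℝ).smulRight dB).comp (ContinuousLinearMap.fst ℝ ℝ ℝ)) S q :=
    hBder.hasFDerivWithinAt.comp q hasFDerivWithinAt_fst hmaps
  have hud : HasFDerivWithinAt u (fderivWithin ℝ u S q) S q :=
    ((hu.differentiableOn one_ne_zero) q hq).hasFDerivWithinAt
  have hvd : HasFDerivWithinAt v (fderivWithin ℝ v S q) S q :=
    ((hv.differentiableOn one_ne_zero) q hq).hasFDerivWithinAt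
  have huN := hud.smul fN
  have hvB := hvd.smul fB
  have hpder : HasFDerivWithinAt p
      ((((1 : ℝ →L[ℝ] ℝ).smulRight (T s)).comp (ContinuousLinearMap.fst ℝ ℝ ℝ)
        + (u q • (((1 : ℝ →L[ℝ] ℝ).smulRight dN).comp (ContinuousLinearMap.fst ℝ ℝ ℝ))
          + (fderivWithin ℝ u S q).smulRight (N s)))
        + (v q • (((1 : ℝ →L[ℝ] ℝ).smulRight dB).comp (ContinuousLinearMap.fst ℝ ℝ ℝ))
          + (fderivWithin ℝ v S q).smulRight (B s))) S q := by
    rw [hp]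
    exact (fγ.add huN).add hvB
  have hfp := hpder.fderivWithin (hSu q hq)
  have hpsv : ps q = T s + (us q • N s + u q • dN) + (vs q • B s + v q • dB) := by
    simp only [hps, hus, hvs]
    rw [hfp]
    simp [ContinuousLinearMap.add_apply, ContinuousLinearMap.comp_apply,
      ContinuousLinearMap.smulRight_apply, ContinuousLinearMap.coe_fst',
      ContinuousLinearMap.one_apply, ContinuousLinearMap.smul_apply]
    module
  have hptv : pt q = ut q • N s + vt q • B s := by
    simp only [hpt, hut, hvt]
    rw [hfp]
    simp [ContinuousLinearMap.add_apply, ContinuousLinearMap.comp_apply,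
      ContinuousLinearMap.smulRight_apply, ContinuousLinearMap.coe_fst',
      ContinuousLinearMap.one_apply, ContinuousLinearMap.smul_apply]
  -- components of ps and pt in the frame
  have hα : ⟪ps q, T s⟫ = 1 - u q * κn s + v q * κg s := by
    rw [hpsv]
    simp only [inner_add_left, real_inner_smul_left]
    rw [hTT s hq1, hNperp s hq1, hBT s hq1]
    have e1 : ⟪dN, T s⟫ = -⟪N s, dT⟫ := by linarith [rNT]
    have e2 : ⟪dB, T s⟫ = -⟪B s, dT⟫ := by linarith [rBT]
    rw [e1, e2, hκns, hκgs, real_inner_comm dT (N s), real_inner_comm dT (B s)]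
    ring
  have hβ : ⟪ps q, N s⟫ = us q - τg s * v q := by
    rw [hpsv]
    simp only [inner_add_left, real_inner_smul_left]
    rw [real_inner_comm (N s) (T s), hNperp s hq1, hNN s hq1, rNN, hBN s hq1]
    have e2 : ⟪dB, N s⟫ = -⟪B s, dN⟫ := by linarith [rBN]
    rw [e2, hτgs, real_inner_comm dN (B s)]
    ring
  have hδ : ⟪ps q, B s⟫ = vs q + τg s * u q := by
    rw [hpsv]
    simp only [inner_add_left, real_inner_smul_left]
    rw [real_inner_comm (B s) (T s), hBT s hq1, real_inner_comm (B s) (N s), hBN s hq1,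
      hBB s hq1, rBB, hτgs]
    ring
  have hnpt : ‖pt q‖ ^ 2 = ut q ^ 2 + vt q ^ 2 := by
    rw [hptv]
    rw [← real_inner_self_eq_norm_sq]
    simp only [inner_add_left, inner_add_right, real_inner_smul_left, real_inner_smul_right]
    rw [hNN s hq1, hBB s hq1, real_inner_comm (B s) (N s), hBN s hq1]
    ring
  have hinner : ⟪ps q, pt q⟫ = ut q * ⟪ps q, N s⟫ + vt q * ⟪ps q, B s⟫ := by
    rw [hptv]
    simp only [inner_add_right, real_inner_smul_right]
  have hnps : ‖ps q‖ ^ 2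
      = ⟪ps q, T s⟫ ^ 2 + ⟪ps q, N s⟫ ^ 2 + ⟪ps q, B s⟫ ^ 2 :=
    parseval3 (T s) (N s) (B s) (ps q) (hγunit s hq1) (hNunit s hq1) (hBnorm s hq1)
      (by rw [real_inner_comm]; exact hNperp s hq1)
      (by rw [real_inner_comm]; exact hBT s hq1)
      (by rw [real_inner_comm]; exact hBN s hq1)
  -- final computation
  rw [cross3_norm_sq, hnps, hnpt, hinner, hα, hβ, hδ]
  ring
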